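/- Let k ≥ 4, let G = (V, E) be a finite simple graph with m edges, let α > 2k, and let w_2 ≥ 0 (with w_0 = 0, w_1 = 1). Construct the k-uniform hypergraph H whose vertex set is V together with new vertices s_1, …, s_α and t_1, …, t_α, and whose hyperedges are: all k-element subsets of {s_1, …, s_α}, all k-element subsets of {t_1, …, t_α}, and for each edge {x, y} ∈ E the two hyperedges {s_1, …, s_{k−2}, x, y} and {t_1, …, t_{k−2}, x, y}. Then for every cut S* with {s_1, …, s_α} ⊆ S* and {t_1, …, t_α} disjoint from S*, the cardinality-based cost of S* equals w_2·(m − c) + 2c, where c is the number of edges of G with exactly one endpoint in S*. -/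

import Mathlib

/-!
Hyperedges inside the two cliques are never split, since `S` contains every `s_i` and no `t_i`.
For an edge `{x, y}` of `G` with `j` endpoints in `S`, the two gadget hyperedges
`{s_1,…,s_{k-2},x,y}` and `{t_1,…,t_{k-2},x,y}` have split values `2 - j` and `j`
(the side of size `k - 2 ≥ 2` is the majority), so together they cost `w 1 + w 1 = 2`
when the edge is cut and `w 2 + w 0 = w 2` otherwise.
-/

/-- The split value of a hyperedge `e` with respect to a cut `S`:
`min (|e ∩ S|, |e \ S|)`. -/
def splitVal {W : Type*} [DecidableEq W] (S e : Finset W) : ℕ :=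
  min (e ∩ S).card (e \ S).card

/-- The vertex set of the constructed hypergraph: the original vertices `V`
together with `s`-vertices and `t`-vertices (indexed by naturals). -/
abbrev Vtx (V : Type*) := V ⊕ ℕ ⊕ ℕ

/-- The vertex `s_i`. -/
def sV {V : Type*} (i : ℕ) : Vtx V := Sum.inr (Sum.inl i)

/-- The vertex `t_i`. -/
def tV {V : Type*} (i : ℕ) : Vtx V := Sum.inr (Sum.inr i)

/-- The set `{s_1, …, s_j}`. -/
def sSet (V : Type*) [DecidableEq V] (j : ℕ) : Finset (Vtx V) := (Finset.Icc 1 j).image sV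

/-- The set `{t_1, …, t_j}`. -/
def tSet (V : Type*) [DecidableEq V] (j : ℕ) : Finset (Vtx V) := (Finset.Icc 1 j).image tV

/-- The two endpoints of a graph edge, as a `Finset`. -/
def pairFinset {V : Type*} [DecidableEq V] (e : Sym2 V) : Finset V :=
  Sym2.lift ⟨fun x y => ({x, y} : Finset V), fun _ _ => Finset.pair_comm _ _⟩ e

/-- The image `{x, y}` (inside `Vtx V`) of a graph edge `{x, y}`. -/
def edgeImg {V : Type*} [DecidableEq V] (e : Sym2 V) : Finset (Vtx V) :=
  (pairFinset e).image Sum.inl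

/-- The maximum cut value of `G`: the maximum over subsets `U` of the vertex set
of the number of edges with exactly one endpoint in `U`. -/
def maxCut {V : Type*} [Fintype V] [DecidableEq V] (G : SimpleGraph V)
    [DecidableRel G.Adj] : ℕ :=
  Finset.univ.sup fun U : Finset V =>
    (G.edgeFinset.filter (fun e => (pairFinset e ∩ U).card = 1)).card

/-- The `k`-uniform hyperedge family built from `G`: all `k`-element subsets of the
two cliques `{s_1,…,s_α}` and `{t_1,…,t_α}`, and for each edge `{x,y}` of `G` the
two hyperedges `{s_1,…,s_{k-2},x,y}` and `{t_1,…,t_{k-2},x,y}`. -/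
def H7 {V : Type*} [Fintype V] [DecidableEq V] (G : SimpleGraph V) [DecidableRel G.Adj]
    (α k : ℕ) : Finset (Finset (Vtx V)) :=
  (sSet V α).powersetCard k ∪ (tSet V α).powersetCard k ∪
    G.edgeFinset.image (fun e => sSet V (k - 2) ∪ edgeImg e) ∪
    G.edgeFinset.image (fun e => tSet V (k - 2) ∪ edgeImg e)

lemma weight_two_sub_add_weight {w : ℕ → ℝ} (hw0 : w 0 = 0) (hw1 : w 1 = 1) {j : ℕ}
    (hj : j ≤ 2) : w (2 - j) + w j = if j = 1 then 2 else w 2 := by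
  interval_cases j <;> norm_num [hw0, hw1]

section SplitVal
variable {W : Type*} [DecidableEq W] {S A B : Finset W}

lemma splitVal_eq_zero_of_subset (h : A ⊆ S) : splitVal S A = 0 := by
  simp [splitVal, Finset.sdiff_eq_empty_iff_subset.mpr h]

lemma splitVal_eq_zero_of_disjoint (h : Disjoint A S) : splitVal S A = 0 := by
  simp [splitVal, Finset.disjoint_iff_inter_eq_empty.mp h]

lemma splitVal_union_of_subset (hAS : A ⊆ S) (hAB : Disjoint A B) (hBA : B.card ≤ A.card) :
    splitVal S (A ∪ B) = (B \ S).card := by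
  have hin : ((A ∪ B) ∩ S).card = A.card + (B ∩ S).card := by
    rw [Finset.union_inter_distrib_right, Finset.inter_eq_left.mpr hAS,
      Finset.card_union_of_disjoint (hAB.mono_right Finset.inter_subset_left)]
  have hout : (A ∪ B) \ S = B \ S := by
    rw [Finset.union_sdiff_distrib, Finset.sdiff_eq_empty_iff_subset.mpr hAS,
      Finset.empty_union]
  have := Finset.card_inter_add_card_sdiff B S
  rw [splitVal, hin, hout]
  omega

lemma splitVal_union_of_disjoint (hAS : Disjoint A S) (hAB : Disjoint A B)
    (hBA : B.card ≤ A.card) : splitVal S (A ∪ B) = (B ∩ S).card := by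
  have hin : (A ∪ B) ∩ S = B ∩ S := by
    rw [Finset.union_inter_distrib_right, Finset.disjoint_iff_inter_eq_empty.mp hAS,
      Finset.empty_union]
  have hout : ((A ∪ B) \ S).card = A.card + (B \ S).card := by
    rw [Finset.union_sdiff_distrib, Finset.sdiff_eq_self_of_disjoint hAS,
      Finset.card_union_of_disjoint (hAB.mono_right Finset.sdiff_subset)]
  have := Finset.card_inter_add_card_sdiff B S
  rw [splitVal, hin, hout]
  omega

end SplitVal

section Gadget
variable {V : Type*} [DecidableEq V]

lemma card_sSet (j : ℕ) : (sSet V j).card = j := by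
  rw [sSet, Finset.card_image_of_injective _ fun a b h => by simpa [sV] using h, Nat.card_Icc]
  omega

lemma card_tSet (j : ℕ) : (tSet V j).card = j := by
  rw [tSet, Finset.card_image_of_injective _ fun a b h => by simpa [tV] using h, Nat.card_Icc]
  omega

lemma sSet_mono {i j : ℕ} (h : i ≤ j) : sSet V i ⊆ sSet V j :=
  Finset.image_subset_image (Finset.Icc_subset_Icc_right h)

lemma tSet_mono {i j : ℕ} (h : i ≤ j) : tSet V i ⊆ tSet V j :=
  Finset.image_subset_image (Finset.Icc_subset_Icc_right h)

lemma disjoint_sSet_edgeImg (j : ℕ) (e : Sym2 V) : Disjoint (sSet V j) (edgeImg e) := by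
  simp [Finset.disjoint_left, sSet, edgeImg, sV]

lemma disjoint_tSet_edgeImg (j : ℕ) (e : Sym2 V) : Disjoint (tSet V j) (edgeImg e) := by
  simp [Finset.disjoint_left, tSet, edgeImg, tV]

lemma mem_pairFinset {e : Sym2 V} {x : V} : x ∈ pairFinset e ↔ x ∈ e := by
  induction e using Sym2.ind with
  | _ a b => simp [pairFinset, Sym2.mem_iff]

lemma edgeImg_injective : Function.Injective (edgeImg (V := V)) := fun e e' h =>
  Sym2.ext fun x => by
    rw [← mem_pairFinset, ← mem_pairFinset, Finset.image_injective Sum.inl_injective h]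

lemma card_edgeImg {G : SimpleGraph V} {e : Sym2 V} (he : e ∈ G.edgeSet) :
    (edgeImg e).card = 2 := by
  rw [edgeImg, Finset.card_image_of_injective _ Sum.inl_injective]
  induction e using Sym2.ind with
  | _ a b => exact Finset.card_pair (G.ne_of_adj he)

lemma union_edgeImg_injective {A : Finset (Vtx V)} (hA : ∀ e, Disjoint A (edgeImg e)) :
    Function.Injective fun e => A ∪ edgeImg e := fun e e' h =>
  edgeImg_injective <| by
    rw [← Finset.union_sdiff_cancel_left (hA e), ← Finset.union_sdiff_cancel_left (hA e')]
    exact congrArg (· \ A) h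

-- an `s`-side hyperedge contains `s_1`, a `t`-side one does not
lemma disjoint_image_sSet_union_tSet_union {j : ℕ} (hj : 1 ≤ j) (E : Finset (Sym2 V)) :
    Disjoint (E.image fun e => sSet V j ∪ edgeImg e)
      (E.image fun e => tSet V j ∪ edgeImg e) := by
  simp only [Finset.disjoint_left, Finset.mem_image]
  rintro _ ⟨e, -, rfl⟩ ⟨e', -, he'⟩
  have hs1 : sV 1 ∈ sSet V j ∪ edgeImg e := by
    simp only [Finset.mem_union, sSet, Finset.mem_image, Finset.mem_Icc]
    exact Or.inl ⟨1, by omega, rfl⟩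
  rw [← he'] at hs1
  simp [tSet, edgeImg, sV, tV] at hs1

lemma weight_gadget_pair {w : ℕ → ℝ} (hw0 : w 0 = 0) (hw1 : w 1 = 1) {j : ℕ} (hj : 2 ≤ j)
    {S : Finset (Vtx V)} (hsS : sSet V j ⊆ S) (htS : Disjoint (tSet V j) S)
    {G : SimpleGraph V} {e : Sym2 V} (he : e ∈ G.edgeSet) :
    w (splitVal S (sSet V j ∪ edgeImg e)) + w (splitVal S (tSet V j ∪ edgeImg e))
      = if (edgeImg e ∩ S).card = 1 then 2 else w 2 := by
  have h2 := card_edgeImg he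
  have hsplit := Finset.card_inter_add_card_sdiff (edgeImg e) S
  rw [splitVal_union_of_subset hsS (disjoint_sSet_edgeImg _ e) (by rw [card_sSet]; omega),
    splitVal_union_of_disjoint htS (disjoint_tSet_edgeImg _ e) (by rw [card_tSet]; omega),
    show (edgeImg e \ S).card = 2 - (edgeImg e ∩ S).card by omega]
  exact weight_two_sub_add_weight hw0 hw1 (by omega)

end Gadget

lemma sum_ite_const_eq {ι : Type*} (s : Finset ι) (p : ι → Prop) [DecidablePred p]
    (a b : ℝ) :
    ∑ i ∈ s, (if p i then a else b)
      = a * (s.filter p).card + b * ((s.card : ℝ) - (s.filter p).card) := by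
  rw [Finset.sum_ite, Finset.sum_const, Finset.sum_const, nsmul_eq_mul, nsmul_eq_mul,
    ← Finset.card_filter_add_card_filter_not (s := s) p]
  push_cast
  ring

theorem stmt7_general {V : Type*} [Fintype V] [DecidableEq V]
    (k : ℕ) (hk : 4 ≤ k)
    (G : SimpleGraph V) [DecidableRel G.Adj]
    (m : ℕ) (hm : m = G.edgeFinset.card)
    (α : ℕ) (hα : 2 * k < α)
    (w : ℕ → ℝ) (hw0 : w 0 = 0) (hw1 : w 1 = 1)
    (S : Finset (Vtx V))
    (hS : sSet V α ⊆ S) (hT : ∀ v ∈ tSet V α, v ∉ S)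
    (c : ℕ)
    (hc : c = (G.edgeFinset.filter
      (fun e => ((edgeImg e).filter (· ∈ S)).card = 1)).card) :
    ∑ e ∈ H7 G α k, w (splitVal S e) = w 2 * ((m : ℝ) - c) + 2 * c := by
  have hTS : Disjoint (tSet V α) S := Finset.disjoint_left.mpr hT
  have hsS : sSet V (k - 2) ⊆ S := (sSet_mono (by omega)).trans hS
  have htS : Disjoint (tSet V (k - 2)) S := hTS.mono_left (tSet_mono (by omega))
  have hcliques : ∀ A ∈ (sSet V α).powersetCard k ∪ (tSet V α).powersetCard k,
      w (splitVal S A) = 0 := by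
    intro A hA
    rcases Finset.mem_union.mp hA with hA | hA <;> rw [Finset.mem_powersetCard] at hA
    · rw [splitVal_eq_zero_of_subset (hA.1.trans hS), hw0]
    · rw [splitVal_eq_zero_of_disjoint (hTS.mono_left hA.1), hw0]
  rw [H7, Finset.union_assoc, Finset.sum_union_eq_right fun A hA _ => hcliques A hA,
    Finset.sum_union (disjoint_image_sSet_union_tSet_union (by omega) _),
    Finset.sum_image (union_edgeImg_injective (disjoint_sSet_edgeImg _)).injOn,
    Finset.sum_image (union_edgeImg_injective (disjoint_tSet_edgeImg _)).injOn,
    ← Finset.sum_add_distrib, Finset.sum_congr rfl fun e he =>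
      weight_gadget_pair hw0 hw1 (by omega) hsS htS (SimpleGraph.mem_edgeFinset.mp he),
    sum_ite_const_eq, hm, hc]
  simp only [Finset.filter_mem_eq_inter]
  ring

theorem stmt7 {V : Type*} [Fintype V] [DecidableEq V]
    (k : ℕ) (hk : 4 ≤ k)
    (G : SimpleGraph V) [DecidableRel G.Adj]
    (m : ℕ) (hm : m = G.edgeFinset.card)
    (α : ℕ) (hα : 2 * k < α)
    (w : ℕ → ℝ) (hw0 : w 0 = 0) (hw1 : w 1 = 1) (hw2 : 0 ≤ w 2)
    (S : Finset (Vtx V))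
    (hS : sSet V α ⊆ S) (hT : ∀ v ∈ tSet V α, v ∉ S)
    (c : ℕ)
    (hc : c = (G.edgeFinset.filter
      (fun e => ((edgeImg e).filter (· ∈ S)).card = 1)).card) :
    ∑ e ∈ H7 G α k, w (splitVal S e) = w 2 * ((m : ℝ) - c) + 2 * c :=
  stmt7_general k hk G m hm α hα w hw0 hw1 S hS hT c hc
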